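/- Let W be a module with non-degenerate Hermitian or skew-Hermitian form β in which every transversal pair of complemented submodules is adjoinable. For x, z common complements of a and b, the adjoint of M_{xabz} = P^a_x - P^z_b is M_{a^⊥ x^⊥ z^⊥ b^⊥} = -M_{x^⊥ a^⊥ b^⊥ z^⊥}. Consequently (Γ(x,a,y,b,z))^⊥ = Γ(x^⊥, b^⊥, y^⊥, a^⊥, z^⊥) for all x,y,z ∈ C_{ab}, i.e., orthocomplementation reverses the middle two arguments of the restricted multiplication map. -/

import Mathlib

open Classical in
/-- The projection `P^a_x` with image `x` and kernel `a` (zero if not complementary). -/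
noncomputable def projEnd {B W : Type*} [Ring B] [AddCommGroup W] [Module B W]
    (x a : Submodule B W) : Module.End B W :=
  if h : IsCompl x a then x.subtype ∘ₗ x.linearProjOfIsCompl a h else 0

/-- The orthogonal complement of a submodule with respect to a form `β`. -/
def perpSub {B W : Type*} [Ring B] [AddCommGroup W] [Module B W]
    (β : W → W → B)
    (hadd₂ : ∀ v w w' : W, β v (w + w') = β v w + β v w')
    (hsmul₂ : ∀ (r : B) (v w : W), β v (r • w) = β v w * r)
    (S : Submodule B W) : Submodule B W where
  carrier := {w | ∀ s ∈ S, β s w = 0}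
  add_mem' := fun {w w'} hw hw' s hs => by
    rw [hadd₂, hw s hs, hw' s hs, add_zero]
  zero_mem' := fun s _ => by
    have h := hadd₂ s 0 0
    rw [add_zero] at h
    exact (left_eq_add.mp h)
  smul_mem' := fun r w hw s hs => by
    rw [hsmul₂, hw s hs, zero_mul]

/-! Writing `M = M_{xabz}`, the adjoint of `M` is the difference of the adjoint projections, and
`P^{x^⊥}_{a^⊥} = 1 - P^{a^⊥}_{x^⊥}` turns it into `-M_{x^⊥a^⊥b^⊥z^⊥}`. Because the form is
Hermitian or skew-Hermitian, `M^*` is also a left adjoint of `M`, so `(M y)^⊥` is the preimage of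
`y^⊥` under `M^*`. For any common complements one has `M_{xabz} M_{xbaz} = 1`, so
`M_{x^⊥a^⊥b^⊥z^⊥}` is invertible with inverse `M_{x^⊥b^⊥a^⊥z^⊥}`, and the preimage is the image
under that inverse. -/

namespace projEnd

variable {B W : Type*} [Ring B] [AddCommGroup W] [Module B W] {x a : Submodule B W}

theorem eq_projection (h : IsCompl x a) : projEnd x a = x.projection a h := by
  simp only [projEnd, h, dite_true]
  rfl

theorem apply_mem (x a : Submodule B W) (w : W) : projEnd x a w ∈ x := by
  by_cases h : IsCompl x a
  · rw [eq_projection h]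
    exact Submodule.projection_apply_mem h w
  · simp [projEnd, h]

theorem add_swap (h : IsCompl x a) : projEnd x a + projEnd a x = 1 := by
  rw [eq_projection h, eq_projection h.symm]
  exact Submodule.projection_add_projection_eq_id h

theorem mul_of_apply_mem_left (h : IsCompl x a) {f : Module.End B W} (hf : ∀ w, f w ∈ x) :
    projEnd x a * f = f := by
  ext w
  rw [Module.End.mul_apply, eq_projection h, Submodule.projection_apply_of_mem_left h (hf w)]

theorem mul_of_apply_mem_right (h : IsCompl x a) {f : Module.End B W} (hf : ∀ w, f w ∈ a) :
    projEnd x a * f = 0 := by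
  ext w
  rw [Module.End.mul_apply, eq_projection h, Submodule.projection_apply_of_mem_right h (hf w)]
  rfl

end projEnd

section projDiff

variable {B W : Type*} [Ring B] [AddCommGroup W] [Module B W]

/-- The paper's `M_{xabz} = P^a_x - P^z_b`, where `P^a_x = projEnd x a` has image `x` and
kernel `a`. -/
noncomputable def projDiff (x a b z : Submodule B W) : Module.End B W :=
  projEnd x a - projEnd b z

theorem projDiff_mul_projDiff_swap {x a b z : Submodule B W}
    (hxa : IsCompl x a) (hxb : IsCompl x b) (hza : IsCompl z a) (hzb : IsCompl z b) :
    projDiff x a b z * projDiff x b a z = 1 := by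
  have hxa_xb : projEnd x a * projEnd x b = projEnd x b :=
    projEnd.mul_of_apply_mem_left hxa (projEnd.apply_mem x b)
  have hxa_az : projEnd x a * projEnd a z = 0 :=
    projEnd.mul_of_apply_mem_right hxa (projEnd.apply_mem a z)
  have hbz_bx : projEnd b z * projEnd b x = projEnd b x :=
    projEnd.mul_of_apply_mem_left hzb.symm (projEnd.apply_mem b x)
  have hbz_za : projEnd b z * projEnd z a = 0 :=
    projEnd.mul_of_apply_mem_right hzb.symm (projEnd.apply_mem z a)
  have hbz_xb : projEnd b z * projEnd x b = projEnd b z - projEnd b x := by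
    rw [eq_sub_of_add_eq (projEnd.add_swap hxb), mul_sub, mul_one, hbz_bx]
  have hbz_az : projEnd b z * projEnd a z = projEnd b z := by
    rw [eq_sub_of_add_eq (projEnd.add_swap hza.symm), mul_sub, mul_one, hbz_za, sub_zero]
  rw [projDiff, projDiff, sub_mul, mul_sub, mul_sub, hxa_xb, hxa_az, hbz_xb, hbz_az,
    ← projEnd.add_swap hxb]
  abel

theorem projDiff_swap_swap {x a b z : Submodule B W} (hxa : IsCompl x a) (hbz : IsCompl b z) :
    projDiff a x z b = -projDiff x a b z := by
  rw [projDiff, projDiff, eq_sub_of_add_eq' (projEnd.add_swap hxa),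
    eq_sub_of_add_eq' (projEnd.add_swap hbz)]
  abel

end projDiff

theorem Submodule.comap_eq_map_of_mul_eq_one {R M : Type*} [Ring R] [AddCommGroup M] [Module R M]
    {f g : Module.End R M} (hfg : f * g = 1) (hgf : g * f = 1) (p : Submodule R M) :
    p.comap f = p.map g :=
  (Submodule.map_equiv_eq_comap_symm (LinearEquiv.ofLinearMap g f hgf hfg) p).symm

theorem form_apply_left_of_apply_right {B W : Type*} [Ring B] [StarRing B] {β : W → W → B}
    (hherm : (∀ v w : W, β v w = star (β w v)) ∨ (∀ v w : W, β v w = -star (β w v)))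
    {F G : W → W} (hadj : ∀ v w, β v (F w) = β (G v) w) (v w : W) :
    β (F v) w = β v (G w) := by
  rcases hherm with h | h
  · rw [h (F v), hadj, ← h]
  · rw [h (F v), hadj, h v]

section form

variable {B W : Type*} [Ring B] [AddCommGroup W] {β : W → W → B}

theorem form_sub_left (hadd₁ : ∀ v v' w : W, β (v + v') w = β v w + β v' w) (v v' w : W) :
    β (v - v') w = β v w - β v' w :=
  (AddMonoidHom.mk' (β · w) fun v v' => hadd₁ v v' w).map_sub v v'

theorem form_sub_right (hadd₂ : ∀ v w w' : W, β v (w + w') = β v w + β v w') (v w w' : W) :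
    β v (w - w') = β v w - β v w' :=
  (AddMonoidHom.mk' (β v) (hadd₂ v)).map_sub w w'

variable [Module B W]

theorem form_adjoint_sub (hadd₁ : ∀ v v' w : W, β (v + v') w = β v w + β v' w)
    (hadd₂ : ∀ v w w' : W, β v (w + w') = β v w + β v w')
    {P P' Q Q' : Module.End B W} (hP : ∀ v w, β v (P w) = β (P' v) w)
    (hQ : ∀ v w, β v (Q w) = β (Q' v) w) (v w : W) :
    β v ((P - Q) w) = β ((P' - Q') v) w := by
  rw [LinearMap.sub_apply, LinearMap.sub_apply, form_sub_right hadd₂, form_sub_left hadd₁, hP, hQ]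

theorem perpSub_map_eq_comap (hadd₂ : ∀ v w w' : W, β v (w + w') = β v w + β v w')
    (hsmul₂ : ∀ (r : B) (v w : W), β v (r • w) = β v w * r) {M N : Module.End B W}
    (hadj : ∀ v w, β (M v) w = β v (N w)) (S : Submodule B W) :
    perpSub β hadd₂ hsmul₂ (S.map M) = (perpSub β hadd₂ hsmul₂ S).comap N := by
  ext w
  constructor
  · intro hw s hs
    rw [← hadj]
    exact hw _ ⟨s, hs, rfl⟩
  · rintro hw _ ⟨s, hs, rfl⟩
    rw [hadj]
    exact hw s hs

end form

theorem stmt10_general {B W : Type*} [Ring B] [StarRing B] [AddCommGroup W] [Module B W]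
    (β : W → W → B)
    (hadd₁ : ∀ v v' w : W, β (v + v') w = β v w + β v' w)
    (hadd₂ : ∀ v w w' : W, β v (w + w') = β v w + β v w')
    (hsmul₂ : ∀ (r : B) (v w : W), β v (r • w) = β v w * r)
    (hherm : (∀ v w : W, β v w = star (β w v)) ∨ (∀ v w : W, β v w = -star (β w v)))
    -- every transversal pair of complemented submodules is adjoinable, and the
    -- adjoint of `P^u_v`... i.e. of the projection onto `u` along `v` is the
    -- projection onto `v^⊥` along `u^⊥`:
    (hadjall : ∀ u v : Submodule B W, IsCompl u v →
      IsCompl (perpSub β hadd₂ hsmul₂ v) (perpSub β hadd₂ hsmul₂ u) ∧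
      ∀ w₁ w₂ : W, β w₁ (projEnd u v w₂)
        = β (projEnd (perpSub β hadd₂ hsmul₂ v) (perpSub β hadd₂ hsmul₂ u) w₁) w₂)
    (x a z b : Submodule B W)
    (hxa : IsCompl x a) (hxb : IsCompl x b) (hza : IsCompl z a) (hzb : IsCompl z b) :
    letI perp := perpSub β hadd₂ hsmul₂
    -- the adjoint of M_{xabz} = P^a_x - P^z_b is M_{a^⊥x^⊥z^⊥b^⊥} = P^{x^⊥}_{a^⊥} - P^{b^⊥}_{z^⊥}
    (∀ v w : W, β v ((projEnd x a - projEnd b z) w)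
        = β ((projEnd (perp a) (perp x) - projEnd (perp z) (perp b)) v) w) ∧
    -- and M_{a^⊥x^⊥z^⊥b^⊥} = -M_{x^⊥a^⊥b^⊥z^⊥}
    (projEnd (perp a) (perp x) - projEnd (perp z) (perp b)
        = -(projEnd (perp x) (perp a) - projEnd (perp b) (perp z))) ∧
    -- (Γ(x,a,y,b,z))^⊥ = Γ(x^⊥,b^⊥,y^⊥,a^⊥,z^⊥)
    (∀ y : Submodule B W, IsCompl y a → IsCompl y b →
      perp (Submodule.map (projEnd x a - projEnd b z) y)
        = Submodule.map (projEnd (perp x) (perp b) - projEnd (perp a) (perp z)) (perp y)) := by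
  set perp := perpSub β hadd₂ hsmul₂
  have hperp {u v : Submodule B W} (h : IsCompl u v) : IsCompl (perp v) (perp u) :=
    (hadjall u v h).1
  have hadj : ∀ v w, β v (projDiff x a b z w)
      = β (projDiff (perp a) (perp x) (perp z) (perp b) v) w :=
    form_adjoint_sub hadd₁ hadd₂ (hadjall x a hxa).2 (hadjall b z hzb.symm).2
  have hneg := projDiff_swap_swap (hperp hxa.symm) (hperp hzb)
  refine ⟨hadj, hneg, fun y _ _ => ?_⟩
  calc perp (y.map (projDiff x a b z))
      = (perp y).comap (projDiff (perp a) (perp x) (perp z) (perp b)) :=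
        perpSub_map_eq_comap hadd₂ hsmul₂ (form_apply_left_of_apply_right hherm hadj) y
    _ = (perp y).comap (projDiff (perp x) (perp a) (perp b) (perp z)) := by
        rw [hneg, Submodule.comap_neg]
    _ = (perp y).map (projDiff (perp x) (perp b) (perp a) (perp z)) :=
        Submodule.comap_eq_map_of_mul_eq_one
          (projDiff_mul_projDiff_swap (hperp hxa.symm) (hperp hxb.symm) (hperp hza.symm)
            (hperp hzb.symm))
          (projDiff_mul_projDiff_swap (hperp hxb.symm) (hperp hxa.symm) (hperp hzb.symm)
            (hperp hza.symm)) _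

/-- if every transversal pair is adjoinable (with the adjoint of
`P^a_x` being `P^{x^⊥}_{a^⊥}`), then for `x, z` common complements of `a, b`,
the adjoint of `M_{xabz} = P^a_x - P^z_b` is
`M_{a^⊥x^⊥z^⊥b^⊥} = -M_{x^⊥a^⊥b^⊥z^⊥}`, and consequently
`(Γ(x,a,y,b,z))^⊥ = Γ(x^⊥,b^⊥,y^⊥,a^⊥,z^⊥)` for all `y ∈ C_{ab}`. -/
theorem stmt10 {B W : Type*} [Ring B] [StarRing B] [AddCommGroup W] [Module B W]
    (β : W → W → B)
    (hadd₁ : ∀ v v' w : W, β (v + v') w = β v w + β v' w)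
    (hadd₂ : ∀ v w w' : W, β v (w + w') = β v w + β v w')
    (hsmul₁ : ∀ (r : B) (v w : W), β (r • v) w = star r * β v w)
    (hsmul₂ : ∀ (r : B) (v w : W), β v (r • w) = β v w * r)
    (hnd₁ : ∀ v : W, (∀ w : W, β v w = 0) → v = 0)
    (hnd₂ : ∀ v : W, (∀ w : W, β w v = 0) → v = 0)
    (hherm : (∀ v w : W, β v w = star (β w v)) ∨ (∀ v w : W, β v w = -star (β w v)))
    -- every transversal pair of complemented submodules is adjoinable, and the
    -- adjoint of `P^u_v`... i.e. of the projection onto `u` along `v` is the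
    -- projection onto `v^⊥` along `u^⊥`:
    (hadjall : ∀ u v : Submodule B W, IsCompl u v →
      IsCompl (perpSub β hadd₂ hsmul₂ v) (perpSub β hadd₂ hsmul₂ u) ∧
      ∀ w₁ w₂ : W, β w₁ (projEnd u v w₂)
        = β (projEnd (perpSub β hadd₂ hsmul₂ v) (perpSub β hadd₂ hsmul₂ u) w₁) w₂)
    (x a z b : Submodule B W)
    (hxa : IsCompl x a) (hxb : IsCompl x b) (hza : IsCompl z a) (hzb : IsCompl z b) :
    letI perp := perpSub β hadd₂ hsmul₂
    -- the adjoint of M_{xabz} = P^a_x - P^z_b is M_{a^⊥x^⊥z^⊥b^⊥} = P^{x^⊥}_{a^⊥} - P^{b^⊥}_{z^⊥}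
    (∀ v w : W, β v ((projEnd x a - projEnd b z) w)
        = β ((projEnd (perp a) (perp x) - projEnd (perp z) (perp b)) v) w) ∧
    -- and M_{a^⊥x^⊥z^⊥b^⊥} = -M_{x^⊥a^⊥b^⊥z^⊥}
    (projEnd (perp a) (perp x) - projEnd (perp z) (perp b)
        = -(projEnd (perp x) (perp a) - projEnd (perp b) (perp z))) ∧
    -- (Γ(x,a,y,b,z))^⊥ = Γ(x^⊥,b^⊥,y^⊥,a^⊥,z^⊥)
    (∀ y : Submodule B W, IsCompl y a → IsCompl y b →
      perp (Submodule.map (projEnd x a - projEnd b z) y)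
        = Submodule.map (projEnd (perp x) (perp b) - projEnd (perp a) (perp z)) (perp y)) :=
  stmt10_general β hadd₁ hadd₂ hsmul₂ hherm hadjall x a z b hxa hxb hza hzb
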